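/- Fix an integer n ≥ 2 and reals b₁ > b₂ ≥ … ≥ bₙ > 0, and fix r₂, …, rₙ > 0. Let f = 8π² / ( b₁² · Σ_{i=2}^{n} rᵢ² · ψ_{bᵢ}(2π/b₁) ), where ψ_b(τ) = 3τ − bτ²·cos(bτ/2)/sin(bτ/2) − sin(bτ)/b. Then f is a well-defined strictly positive real number, and the limit as r₁ → 0⁺ of (τ₁(r₁, r₂, …, rₙ) − 2π/b₁)/r₁² equals f; that is, τ₁(r₁, r₂, …, rₙ) = 2π/b₁ + f·r₁² + o(r₁²) as r₁ → 0⁺. -/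

import Mathlib

/-!
Put `τ₀ = 2π/b₁` and `τ = τ₀ + ε`. On `(0, τ₀)` every `ψ_{bᵢ}` is positive and at `τ₀` the factor
`sin(b₁τ/2)` vanishes, so `τ₁ > τ₀`. Beyond `τ₀` one has `2ψ(τ, r) = r₁² p(ε) + q(ε)`, where
`q(ε) = Σ_{i≥2} rᵢ² ψ_{bᵢ}(τ₀ + ε)` is continuous with `q(0) = S > 0`, while `ψ_{b₁}` has a simple
pole: `ε p(ε) → -A = -8π²/b₁²`. Hence at `ε = c r₁²` the sign of `ψ` is eventually that of
`c S - A`; for `c < A/S` this holds on all of `(0, c r₁²]` because `ε/r₁² ≤ c` and `q > 0`,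
and for `c > A/S` the intermediate value theorem gives a zero in `(0, c r₁²]`.
So `(τ₁ - τ₀)/r₁² → A/S = f`.
-/

open Real Finset Set Filter

/-- The function `ψ_b(τ) = 3τ − b·τ²·cos(bτ/2)/sin(bτ/2) − sin(bτ)/b`. -/
noncomputable def psi (b τ : ℝ) : ℝ :=
  3 * τ - b * τ ^ 2 * Real.cos (b * τ / 2) / Real.sin (b * τ / 2) - Real.sin (b * τ) / b

/-- `ψ(τ, r) = Σ_{i=1}^{n} (rᵢ²/2)·ψ_{bᵢ}(τ)`. -/
noncomputable def psiSum (n : ℕ) (b r : ℕ → ℝ) (τ : ℝ) : ℝ :=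
  ∑ i ∈ Finset.Icc 1 n, (r i) ^ 2 / 2 * psi (b i) τ

open scoped Topology

lemma mul_cos_lt_sin {u : ℝ} (h0 : 0 < u) (h1 : u < π) : u * cos u < sin u := by
  rcases lt_or_ge u (π / 2) with h | h
  · have hc : 0 < cos u := cos_pos_of_mem_Ioo ⟨by linarith [pi_pos], h⟩
    have ht := lt_tan h0 h
    rw [tan_eq_sin_div_cos, lt_div_iff₀ hc] at ht
    exact ht
  · have hc : cos u ≤ 0 := cos_nonpos_of_pi_div_two_le_of_le h (by linarith [pi_pos])
    nlinarith [sin_pos_of_pos_of_lt_pi h0 h1]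

noncomputable def psiNumer (u : ℝ) : ℝ :=
  6 * u * sin u - 4 * u ^ 2 * cos u - 2 * sin u ^ 2 * cos u

lemma hasDerivAt_psiNumer (u : ℝ) :
    HasDerivAt psiNumer (2 * (sin u - u * cos u) + 4 * u ^ 2 * sin u + 6 * sin u ^ 3) u := by
  have h := ((((hasDerivAt_id u).const_mul 6).mul (hasDerivAt_sin u)).sub
    (((hasDerivAt_pow 2 u).const_mul 4).mul (hasDerivAt_cos u))).sub
    ((((hasDerivAt_sin u).pow 2).const_mul 2).mul (hasDerivAt_cos u))
  refine h.congr_deriv ?_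
  simp only [id, Nat.cast_ofNat, Pi.pow_apply]
  linear_combination (-4 * sin u) * sin_sq_add_cos_sq u

lemma psiNumer_pos {u : ℝ} (h0 : 0 < u) (h1 : u ≤ π) : 0 < psiNumer u := by
  have hmono : StrictMonoOn psiNumer (Icc 0 π) := by
    refine strictMonoOn_of_deriv_pos (convex_Icc 0 π)
      (fun v _ => (hasDerivAt_psiNumer v).continuousAt.continuousWithinAt) fun v hv => ?_
    rw [interior_Icc] at hv
    rw [(hasDerivAt_psiNumer v).deriv]
    have hs := sin_pos_of_pos_of_lt_pi hv.1 hv.2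
    have := mul_cos_lt_sin hv.1 hv.2
    positivity
  simpa [psiNumer] using hmono (left_mem_Icc.2 pi_pos.le) ⟨h0.le, h1⟩ h0

lemma psi_eq_psiNumer_div {b τ : ℝ} (hb : b ≠ 0) (hs : sin (b * τ / 2) ≠ 0) :
    psi b τ = psiNumer (b * τ / 2) / (b * sin (b * τ / 2)) := by
  set u := b * τ / 2 with hu
  have hτ : τ = 2 * u / b := by rw [hu]; field_simp
  have h2 : sin (b * τ) = 2 * sin u * cos u := by
    rw [← sin_two_mul, hu]; ring_nf
  rw [psi, psiNumer, h2]
  clear_value u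
  subst hτ
  field_simp
  ring

lemma sin_half_mul_pos {b τ : ℝ} (hb : 0 < b) (hτ : 0 < τ) (h2π : b * τ < 2 * π) :
    0 < sin (b * τ / 2) :=
  sin_pos_of_pos_of_lt_pi (by positivity) (by linarith)

lemma psi_pos {b τ : ℝ} (hb : 0 < b) (hτ : 0 < τ) (h2π : b * τ < 2 * π) : 0 < psi b τ := by
  have hs := sin_half_mul_pos hb hτ h2π
  rw [psi_eq_psiNumer_div hb.ne' hs.ne']
  exact div_pos (psiNumer_pos (by positivity) (by linarith)) (by positivity)

lemma continuousAt_psi {b τ : ℝ} (hs : sin (b * τ / 2) ≠ 0) : ContinuousAt (psi b) τ := by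
  unfold psi
  have : ContinuousAt (fun t => b * t ^ 2 * cos (b * t / 2) / sin (b * t / 2)) τ :=
    ContinuousAt.div (by fun_prop) (by fun_prop) hs
  fun_prop

lemma psi_two_pi_div_add {b : ℝ} (hb : b ≠ 0) (ε : ℝ) :
    psi b (2 * π / b + ε) = 3 * (2 * π / b + ε)
      - b * (2 * π / b + ε) ^ 2 * (cos (b * ε / 2) / sin (b * ε / 2))
      - sin (b * (2 * π / b + ε)) / b := by
  have : b * (2 * π / b + ε) / 2 = b * ε / 2 + π := by field_simp; ring
  rw [psi, this, sin_add_pi, cos_add_pi, mul_neg, neg_div_neg_eq]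
  ring

lemma tendsto_mul_psi_two_pi_div_add {b : ℝ} (hb : b ≠ 0) :
    Tendsto (fun ε => ε * psi b (2 * π / b + ε)) (𝓝[≠] 0) (𝓝 (-(8 * π ^ 2 / b ^ 2))) := by
  set g : ℝ → ℝ := fun ε => ε * (3 * (2 * π / b + ε) - sin (b * (2 * π / b + ε)) / b)
    - b * (2 * π / b + ε) ^ 2 * cos (b * ε / 2) * (2 / b / sinc (b * ε / 2))
  -- `ε / sin (b * ε / 2) = 2 / b / sinc (b * ε / 2)` removes the singularity at `ε = 0`.
  have hsinc : ContinuousAt (fun ε => 2 / b / sinc (b * ε / 2)) 0 :=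
    continuousAt_const.div (by fun_prop) (by simp)
  have hg : ContinuousAt g 0 := by fun_prop
  have hg0 : g 0 = -(8 * π ^ 2 / b ^ 2) := by
    simp only [g, zero_mul, mul_zero, add_zero, zero_div, zero_sub, sinc_zero, cos_zero, div_one,
      mul_one]
    field_simp
    ring
  refine (hg0 ▸ hg.tendsto.mono_left nhdsWithin_le_nhds).congr' ?_
  filter_upwards [self_mem_nhdsWithin] with ε (hε : ε ≠ 0)
  have hεb : 2 / b * (b * ε / 2) = ε := by field_simp
  simp only [g]
  rw [psi_two_pi_div_add hb, sinc_of_ne_zero (by positivity), div_div_eq_mul_div, hεb]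
  ring

lemma eventually_pos_and_mul_lt (c : ℝ) {δ : ℝ} (hδ : 0 < δ) :
    ∀ᶠ x in 𝓝[>] 0, 0 < x ∧ c * x < δ := by
  have hcx : Tendsto (fun x => c * x) (𝓝 0) (𝓝 0) := by
    simpa using (continuous_const_mul c).tendsto 0
  exact eventually_mem_nhdsWithin.and (nhdsWithin_le_nhds (hcx.eventually (gt_mem_nhds hδ)))

lemma tendsto_nhdsGT_zero {f : ℝ → ℝ} (hf : ContinuousAt f 0) (h0 : f 0 = 0)
    (hpos : ∀ x > 0, 0 < f x) : Tendsto f (𝓝[>] 0) (𝓝[>] 0) :=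
  tendsto_nhdsWithin_of_tendsto_nhds_of_eventually_within _
    (by simpa [h0] using hf.tendsto.mono_left nhdsWithin_le_nhds)
    (eventually_nhdsWithin_of_forall hpos)

def IsFirstZeroOn (f : ℝ → ℝ) (U : Set ℝ) (z : ℝ) : Prop :=
  0 < z ∧ f z = 0 ∧ ∀ ε ∈ U, 0 < ε → f ε = 0 → z ≤ ε

section FirstZero

variable {p q : ℝ → ℝ} {A S : ℝ}

lemma eventually_forall_Ioc_mul_add_neg (hp : Tendsto (fun ε => ε * p ε) (𝓝[>] 0) (𝓝 (-A)))
    (hq : Tendsto q (𝓝[>] 0) (𝓝 S)) (hS : 0 < S) {c : ℝ} (hc : c * S < A) :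
    ∀ᶠ x in 𝓝[>] 0, ∀ ε ∈ Ioc 0 (c * x), x * p ε + q ε < 0 := by
  have hlim := hp.add (hq.const_mul c)
  have hev : ∀ᶠ ε in 𝓝[>] 0, ε * p ε + c * q ε < 0 ∧ 0 < q ε :=
    (hlim.eventually (gt_mem_nhds (by linarith))).and (hq.eventually (lt_mem_nhds hS))
  obtain ⟨δ, hδ, hδev⟩ := (nhdsGT_basis (0 : ℝ)).eventually_iff.1 hev
  filter_upwards [eventually_pos_and_mul_lt c hδ] with x ⟨hx, hcx⟩ ε ⟨hε, hεc⟩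
  obtain ⟨hneg, hqpos⟩ := hδev ⟨hε, hεc.trans_lt hcx⟩
  refine neg_of_mul_neg_right ?_ hε.le
  calc ε * (x * p ε + q ε) = x * (ε * p ε) + ε * q ε := by ring
    _ ≤ x * (ε * p ε) + c * x * q ε := by gcongr
    _ = x * (ε * p ε + c * q ε) := by ring
    _ < 0 := mul_neg_of_pos_of_neg hx hneg

lemma eventually_mul_add_pos (hp : Tendsto (fun ε => ε * p ε) (𝓝[>] 0) (𝓝 (-A)))
    (hq : Tendsto q (𝓝[>] 0) (𝓝 S)) {c : ℝ} (hc : 0 < c) (hcS : A < c * S) :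
    ∀ᶠ x in 𝓝[>] 0, 0 < x * p (c * x) + q (c * x) := by
  have hcx : Tendsto (fun x => c * x) (𝓝[>] 0) (𝓝[>] 0) :=
    tendsto_nhdsGT_zero (by fun_prop) (mul_zero c) fun x hx => mul_pos hc hx
  have hlim := ((hp.add (hq.const_mul c)).comp hcx).eventually
    (lt_mem_nhds (by linarith : (0 : ℝ) < -A + c * S))
  filter_upwards [hlim] with x hx
  refine pos_of_mul_pos_right ?_ hc.le
  simpa [Function.comp, mul_add, mul_assoc] using hx

lemma eventually_exists_mul_add_eq_zero (hp : Tendsto (fun ε => ε * p ε) (𝓝[>] 0) (𝓝 (-A)))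
    (hq : Tendsto q (𝓝[>] 0) (𝓝 S)) (hS : 0 < S) (hA : 0 < A) {U : Set ℝ} (hU : U ∈ 𝓝[>] 0)
    (hpU : ∀ ε ∈ U, ContinuousAt p ε) (hqU : ∀ ε ∈ U, ContinuousAt q ε) {c : ℝ}
    (hcS : A < c * S) :
    ∀ᶠ x in 𝓝[>] 0, ∃ ε ∈ U, 0 < ε ∧ ε ≤ c * x ∧ x * p ε + q ε = 0 := by
  set c₀ := A / (2 * S)
  have hc₀S : c₀ * S = A / 2 := by simp only [c₀]; field_simp
  have hc₀ : 0 < c₀ := by positivity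
  have hc₀c : c₀ < c := lt_of_mul_lt_mul_right (by linarith) hS.le
  obtain ⟨δ, hδ, hδU⟩ := (nhdsGT_basis (0 : ℝ)).mem_iff.1 hU
  filter_upwards [eventually_pos_and_mul_lt c hδ,
    eventually_forall_Ioc_mul_add_neg hp hq hS (c := c₀) (by linarith),
    eventually_mul_add_pos hp hq (hc₀.trans hc₀c) hcS] with x ⟨hx, hcx⟩ hneg hpos
  have hIcc : Icc (c₀ * x) (c * x) ⊆ U := fun ε hε =>
    hδU ⟨(mul_pos hc₀ hx).trans_le hε.1, hε.2.trans_lt hcx⟩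
  have hcont : ContinuousOn (fun ε => x * p ε + q ε) (Icc (c₀ * x) (c * x)) :=
    continuousOn_of_forall_continuousAt fun ε hε =>
      (continuousAt_const.mul (hpU ε (hIcc hε))).add (hqU ε (hIcc hε))
  obtain ⟨ε, hε, hzero⟩ := intermediate_value_Icc (by gcongr) hcont
    ⟨(hneg (c₀ * x) ⟨by positivity, le_rfl⟩).le, hpos.le⟩
  exact ⟨ε, hIcc hε, (mul_pos hc₀ hx).trans_le hε.1, hε.2, hzero⟩

theorem tendsto_first_zero_div {ι : Type*} {l : Filter ι} {x z : ι → ℝ}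
    (hx : Tendsto x l (𝓝[>] 0)) (hp : Tendsto (fun ε => ε * p ε) (𝓝[>] 0) (𝓝 (-A)))
    (hq : Tendsto q (𝓝[>] 0) (𝓝 S)) (hS : 0 < S) (hA : 0 < A) {U : Set ℝ} (hU : U ∈ 𝓝[>] 0)
    (hpU : ∀ ε ∈ U, ContinuousAt p ε) (hqU : ∀ ε ∈ U, ContinuousAt q ε)
    (hz : ∀ᶠ i in l, IsFirstZeroOn (fun ε => x i * p ε + q ε) U (z i)) :
    Tendsto (fun i => z i / x i) l (𝓝 (A / S)) := by
  have hxpos : ∀ᶠ i in l, 0 < x i := hx.eventually self_mem_nhdsWithin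
  refine tendsto_order.2 ⟨fun c hc => ?_, fun c hc => ?_⟩
  · have hcS : c * S < A := (lt_div_iff₀ hS).1 hc
    filter_upwards [hz, hxpos, hx.eventually (eventually_forall_Ioc_mul_add_neg hp hq hS hcS)]
      with i ⟨hz0, hzero, _⟩ hxi hneg
    rw [lt_div_iff₀ hxi]
    by_contra! hle
    exact (hneg (z i) ⟨hz0, hle⟩).ne hzero
  · obtain ⟨c', hc', hc'c⟩ := exists_between hc
    have hcS : A < c' * S := (div_lt_iff₀ hS).1 hc'
    filter_upwards [hz, hxpos,
      hx.eventually (eventually_exists_mul_add_eq_zero hp hq hS hA hU hpU hqU hcS)]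
      with i ⟨_, _, hmin⟩ hxi ⟨ε, hεU, hε, hεc, hzero⟩
    rw [div_lt_iff₀ hxi]
    linarith [hmin ε hεU hε hzero, mul_lt_mul_of_pos_right hc'c hxi]

end FirstZero

lemma mul_two_pi_div_lt {β b : ℝ} (hb : 0 < b) (hβ : β < b) : β * (2 * π / b) < 2 * π :=
  calc β * (2 * π / b) < b * (2 * π / b) := mul_lt_mul_of_pos_right hβ (by positivity)
    _ = 2 * π := by field_simp

lemma mem_Icc_two_of_mem_Icc_one {i n : ℕ} (hi : i ∈ Finset.Icc 1 n) (hi1 : i ≠ 1) :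
    i ∈ Finset.Icc 2 n := by
  simp only [Finset.mem_Icc] at *
  omega

lemma continuousAt_sum_psi {s : Finset ℕ} {b r : ℕ → ℝ} {τ : ℝ}
    (hs : ∀ i ∈ s, sin (b i * τ / 2) ≠ 0) :
    ContinuousAt (fun τ => ∑ i ∈ s, r i ^ 2 * psi (b i) τ) τ :=
  tendsto_finsetSum _ fun i hi => (continuousAt_psi (hs i hi)).const_mul _

lemma tendsto_sum_psi_two_pi_div_add {s : Finset ℕ} {b r : ℕ → ℝ} {β : ℝ} (hβ : 0 < β)
    (hb : ∀ i ∈ s, 0 < b i) (hlt : ∀ i ∈ s, b i < β) :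
    Tendsto (fun ε => ∑ i ∈ s, r i ^ 2 * psi (b i) (2 * π / β + ε)) (𝓝 0)
      (𝓝 (∑ i ∈ s, r i ^ 2 * psi (b i) (2 * π / β))) := by
  have hs : ∀ i ∈ s, sin (b i * (2 * π / β) / 2) ≠ 0 := fun i hi =>
    (sin_half_mul_pos (hb i hi) (by positivity) (mul_two_pi_div_lt hβ (hlt i hi))).ne'
  simpa only [Function.comp_def, add_zero] using ((continuousAt_sum_psi (r := r) hs).comp_of_eq
    (by fun_prop : ContinuousAt (fun ε => 2 * π / β + ε) 0) (add_zero _)).tendsto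

lemma psiSum_update_one {n : ℕ} (hn : 1 ≤ n) (b r : ℕ → ℝ) (x τ : ℝ) :
    psiSum n b (Function.update r 1 x) τ
      = (x ^ 2 * psi (b 1) τ + ∑ i ∈ Finset.Icc 2 n, r i ^ 2 * psi (b i) τ) / 2 := by
  have hIcc : Finset.Icc 1 n = insert 1 (Finset.Icc 2 n) := by
    ext i; simp only [Finset.mem_Icc, Finset.mem_insert]; omega
  rw [psiSum, hIcc, sum_insert (by simp), Function.update_self, add_div, sum_div]
  congr 1
  · ring
  · refine sum_congr rfl fun i hi => ?_
    rw [Function.update_of_ne (by simp only [Finset.mem_Icc] at hi; omega)]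
    ring

lemma update_one_pos {n : ℕ} {r : ℕ → ℝ} (hr : ∀ i ∈ Finset.Icc 2 n, 0 < r i) {x : ℝ}
    (hx : 0 < x) : ∀ i ∈ Finset.Icc 1 n, 0 < Function.update r 1 x i := by
  intro i hi
  rcases eq_or_ne i 1 with rfl | hi1
  · simpa using hx
  · rw [Function.update_of_ne hi1]
    exact hr i (mem_Icc_two_of_mem_Icc_one hi hi1)

lemma psiSum_pos {n : ℕ} {b r : ℕ → ℝ} {τ : ℝ} (hτ : 0 < τ) (hb : ∀ i ∈ Finset.Icc 1 n, 0 < b i)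
    (hb2π : ∀ i ∈ Finset.Icc 1 n, b i * τ < 2 * π) (hr : ∃ i ∈ Finset.Icc 1 n, r i ≠ 0) :
    0 < psiSum n b r τ := by
  have hψ (i) (hi : i ∈ Finset.Icc 1 n) : 0 < psi (b i) τ := psi_pos (hb i hi) hτ (hb2π i hi)
  refine sum_pos' (fun i hi => by have := hψ i hi; positivity) ?_
  obtain ⟨i, hi, hri⟩ := hr
  exact ⟨i, hi, mul_pos (by positivity) (hψ i hi)⟩

section Invariants

variable {n : ℕ} {b : ℕ → ℝ} (hb : ∀ i ∈ Finset.Icc 1 n, 0 < b i)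
  (hlt : ∀ i ∈ Finset.Icc 2 n, b i < b 1)
include hb hlt

lemma two_pi_div_lt_of_psiSum_eq_zero {r : ℕ → ℝ} (hr : ∃ i ∈ Finset.Icc 1 n, r i ≠ 0)
    {t : ℝ} (ht : 0 < t) (hsin : ∀ i ∈ Finset.Icc 1 n, sin (b i * t / 2) ≠ 0)
    (hzero : psiSum n b r t = 0) :
    2 * π / b 1 < t := by
  have h1 : 1 ∈ Finset.Icc 1 n := by
    obtain ⟨j, hj, -⟩ := hr
    simp only [Finset.mem_Icc] at hj ⊢
    omega
  have hb1 := hb 1 h1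
  rcases lt_trichotomy t (2 * π / b 1) with hlt₀ | heq | hgt
  · refine absurd hzero (psiSum_pos ht hb (fun i hi => ?_) hr).ne'
    have hle : b i ≤ b 1 := by
      rcases eq_or_ne i 1 with rfl | hi1
      · rfl
      · exact (hlt i (mem_Icc_two_of_mem_Icc_one hi hi1)).le
    calc b i * t ≤ b 1 * t := by gcongr
      _ < b 1 * (2 * π / b 1) := by gcongr
      _ = 2 * π := by field_simp
  · refine absurd ?_ (hsin 1 h1)
    rw [heq, show b 1 * (2 * π / b 1) / 2 = π by field_simp, sin_pi]
  · exact hgt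

lemma eventually_sin_ne_zero :
    ∀ᶠ ε in 𝓝[>] 0, ∀ i ∈ Finset.Icc 1 n, sin (b i * (2 * π / b 1 + ε) / 2) ≠ 0 := by
  refine (eventually_all_finset _).2 fun i hi => ?_
  have hb1 : 0 < b 1 := hb 1 (by simp only [Finset.mem_Icc] at hi ⊢; omega)
  rcases eq_or_ne i 1 with rfl | hi1
  · filter_upwards [Ioo_mem_nhdsGT (by positivity : (0 : ℝ) < 2 * π / b 1)] with ε hε
    have hε' : b 1 * ε < 2 * π := by
      calc b 1 * ε < b 1 * (2 * π / b 1) := by gcongr; exact hε.2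
        _ = 2 * π := by field_simp
    rw [show b 1 * (2 * π / b 1 + ε) / 2 = b 1 * ε / 2 + π by field_simp; ring, sin_add_pi]
    exact neg_ne_zero.2 (sin_half_mul_pos hb1 hε.1 hε').ne'
  · have hi2 := mem_Icc_two_of_mem_Icc_one hi hi1
    have hsin : sin (b i * (2 * π / b 1 + 0) / 2) ≠ 0 := by
      rw [add_zero]
      exact (sin_half_mul_pos (hb i hi) (by positivity) (mul_two_pi_div_lt hb1 (hlt i hi2))).ne'
    exact nhdsWithin_le_nhds ((by fun_prop : Continuous fun ε =>
      sin (b i * (2 * π / b 1 + ε) / 2)).continuousAt.eventually_ne hsin)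

lemma isFirstZeroOn_of_isLeast {r : ℕ → ℝ} {x t : ℝ} (hn : 1 ≤ n) (hx : x ≠ 0)
    (ht : IsLeast {τ : ℝ | 0 < τ ∧ (∀ i ∈ Finset.Icc 1 n, sin (b i * τ / 2) ≠ 0) ∧
      psiSum n b (Function.update r 1 x) τ = 0} t) :
    IsFirstZeroOn (fun ε => x ^ 2 * psi (b 1) (2 * π / b 1 + ε)
        + ∑ i ∈ Finset.Icc 2 n, r i ^ 2 * psi (b i) (2 * π / b 1 + ε))
      {ε | ∀ i ∈ Finset.Icc 1 n, sin (b i * (2 * π / b 1 + ε) / 2) ≠ 0} (t - 2 * π / b 1) := by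
  obtain ⟨⟨ht0, htsin, htzero⟩, hmin⟩ := ht
  have h1 : 1 ∈ Finset.Icc 1 n := Finset.mem_Icc.2 ⟨le_rfl, hn⟩
  have hne : ∃ i ∈ Finset.Icc 1 n, Function.update r 1 x i ≠ 0 := ⟨1, h1, by simpa using hx⟩
  refine ⟨sub_pos.2 (two_pi_div_lt_of_psiSum_eq_zero hb hlt hne ht0 htsin htzero), ?_,
    fun ε hεU hε hzero => ?_⟩
  · rw [psiSum_update_one hn] at htzero
    simpa using htzero
  · have hτ : 0 < 2 * π / b 1 + ε := by have := hb 1 h1; positivity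
    have := hmin ⟨hτ, hεU, by rw [psiSum_update_one hn, ← zero_div 2, ← hzero]⟩
    linarith

end Invariants

/-- Fix `n ≥ 2`, reals `b₁ > b₂ ≥ … ≥ bₙ > 0` and `r₂, …, rₙ > 0`.
Let `f = 8π² / (b₁² · Σ_{i=2}^{n} rᵢ²·ψ_{bᵢ}(2π/b₁))`. Then `f > 0` (in particular it
is well defined) and `(τ₁(r₁, r₂, …, rₙ) − 2π/b₁)/r₁² → f` as `r₁ → 0⁺`; that is,
`τ₁(r₁, r₂, …, rₙ) = 2π/b₁ + f·r₁² + o(r₁²)` as `r₁ → 0⁺`. -/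
theorem statement11 (n : ℕ) (hn : 2 ≤ n) (b : ℕ → ℝ)
    (hpos : ∀ i ∈ Finset.Icc 1 n, 0 < b i)
    (h12 : b 2 < b 1)
    (hanti : ∀ i j, 2 ≤ i → i ≤ j → j ≤ n → b j ≤ b i)
    (tau1 : (ℕ → ℝ) → ℝ)
    (htau1 : ∀ r : ℕ → ℝ, (∀ i ∈ Finset.Icc 1 n, 0 < r i) →
      IsLeast {τ : ℝ | 0 < τ ∧ (∀ i ∈ Finset.Icc 1 n, Real.sin (b i * τ / 2) ≠ 0) ∧
        psiSum n b r τ = 0} (tau1 r))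
    (r : ℕ → ℝ) (hr : ∀ i ∈ Finset.Icc 2 n, 0 < r i) :
    0 < 8 * Real.pi ^ 2 /
        ((b 1) ^ 2 * ∑ i ∈ Finset.Icc 2 n, (r i) ^ 2 * psi (b i) (2 * Real.pi / b 1)) ∧
    Filter.Tendsto
      (fun r₁ : ℝ => (tau1 (Function.update r 1 r₁) - 2 * Real.pi / b 1) / r₁ ^ 2)
      (nhdsWithin 0 (Set.Ioi 0))
      (nhds (8 * Real.pi ^ 2 /
        ((b 1) ^ 2 * ∑ i ∈ Finset.Icc 2 n, (r i) ^ 2 * psi (b i) (2 * Real.pi / b 1)))) := by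
  have h1 : 1 ∈ Finset.Icc 1 n := Finset.mem_Icc.2 ⟨le_rfl, by omega⟩
  have hb1 := hpos 1 h1
  have hsub : Finset.Icc 2 n ⊆ Finset.Icc 1 n := Finset.Icc_subset_Icc_left one_le_two
  have hlt : ∀ i ∈ Finset.Icc 2 n, b i < b 1 := fun i hi =>
    (hanti 2 i le_rfl (Finset.mem_Icc.1 hi).1 (Finset.mem_Icc.1 hi).2).trans_lt h12
  have hS : 0 < ∑ i ∈ Finset.Icc 2 n, r i ^ 2 * psi (b i) (2 * π / b 1) :=
    Finset.sum_pos (fun i hi => mul_pos (pow_pos (hr i hi) 2) (psi_pos (hpos i (hsub hi))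
      (by positivity) (mul_two_pi_div_lt hb1 (hlt i hi)))) ⟨2, Finset.mem_Icc.2 ⟨le_rfl, hn⟩⟩
  refine ⟨by positivity, ?_⟩
  have key := tendsto_first_zero_div (l := 𝓝[>] 0) (x := fun r₁ => r₁ ^ 2)
    (z := fun r₁ => tau1 (Function.update r 1 r₁) - 2 * π / b 1)
    (p := fun ε => psi (b 1) (2 * π / b 1 + ε))
    (q := fun ε => ∑ i ∈ Finset.Icc 2 n, r i ^ 2 * psi (b i) (2 * π / b 1 + ε))
    (tendsto_nhdsGT_zero (by fun_prop) (by simp) fun x hx => by positivity)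
    ((tendsto_mul_psi_two_pi_div_add hb1.ne').mono_left (nhdsGT_le_nhdsNE 0))
    ((tendsto_sum_psi_two_pi_div_add hb1 (fun i hi => hpos i (hsub hi)) hlt).mono_left
      nhdsWithin_le_nhds) hS (by positivity) (eventually_sin_ne_zero hpos hlt)
    (fun ε hε => (continuousAt_psi (hε 1 h1)).comp (f := fun ε => 2 * π / b 1 + ε) (by fun_prop))
    (fun ε hε => (continuousAt_sum_psi fun i hi => hε i (hsub hi)).comp
      (f := fun ε => 2 * π / b 1 + ε) (by fun_prop))
    (eventually_nhdsWithin_of_forall fun r₁ hr₁ => isFirstZeroOn_of_isLeast hpos hlt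
      (by omega) (ne_of_gt hr₁) (htau1 _ (update_one_pos hr hr₁)))
  simpa [div_div] using key
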